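/- arXiv:1611.02484 — 5 statements merged into one kernel-verified Lean document; each statement's English description precedes it below -/
import Mathlib

section
/- Let A be a nonempty bounded closed convex subset of a uniformly convex Banach space X, and let T: A → A be an asymptotically nonexpansive map. Then T has a fixed point in A. -/
open Filter Topology

/-- dist(A,B) = inf { ‖a - b‖ : a ∈ A, b ∈ B }. -/
noncomputable def setDist {X : Type*} [NormedAddCommGroup X] (A B : Set X) : ℝ :=
  sInf {d : ℝ | ∃ a ∈ A, ∃ b ∈ B, d = ‖a - b‖}

/-- (A,B) is a proximal pair. -/
def IsProximalPair {X : Type*} [NormedAddCommGroup X] (A B : Set X) : Prop :=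
  ∀ x ∈ A, ∀ y ∈ B, ∃ x₁ ∈ A, ∃ y₁ ∈ B,
    ‖x - y₁‖ = setDist A B ∧ ‖y - x₁‖ = setDist A B

/-- (A,B) is a sharp proximal pair: the proximal pair (x₁,y₁) is unique. -/
def IsSharpProximalPair {X : Type*} [NormedAddCommGroup X] (A B : Set X) : Prop :=
  IsProximalPair A B ∧
    ∀ x ∈ A, ∀ y ∈ B, ∀ x₁ ∈ A, ∀ y₁ ∈ B, ∀ x₂ ∈ A, ∀ y₂ ∈ B,
      ‖x - y₁‖ = setDist A B → ‖y - x₁‖ = setDist A B →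
      ‖x - y₂‖ = setDist A B → ‖y - x₂‖ = setDist A B → x₁ = x₂ ∧ y₁ = y₂

/-- (A,B) is a proximal parallel pair: a sharp proximal pair with a unique
translation vector h such that B = A + h. -/
def IsProximalParallelPair {X : Type*} [NormedAddCommGroup X] (A B : Set X) : Prop :=
  IsSharpProximalPair A B ∧ ∃! h : X, B = (fun a => a + h) '' A

/-- Property UC of the pair (A, B). -/
def PropertyUC {X : Type*} [NormedAddCommGroup X] (A B : Set X) : Prop :=
  ∀ x z y : ℕ → X, (∀ n, x n ∈ A) → (∀ n, z n ∈ A) → (∀ n, y n ∈ B) →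
    Filter.Tendsto (fun n => ‖x n - y n‖) Filter.atTop (nhds (setDist A B)) →
    Filter.Tendsto (fun n => ‖z n - y n‖) Filter.atTop (nhds (setDist A B)) →
    Filter.Tendsto (fun n => ‖x n - z n‖) Filter.atTop (nhds 0)

/-- Rectangle property of a parallel pair (A, A + h). -/
def RectangleProperty {X : Type*} [NormedAddCommGroup X] (A : Set X) (h : X) : Prop :=
  ∀ x ∈ A, ∀ y ∈ A, ‖x + h - y‖ = ‖y + h - x‖

/-- T is asymptotically relatively nonexpansive (with sequence k) on the pair (A,B). -/
def AsympRelNonexpansive {X : Type*} [NormedAddCommGroup X]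
    (A B : Set X) (T : X → X) (k : ℕ → ℝ) : Prop :=
  (∀ n, 1 ≤ k n) ∧ Filter.Tendsto k Filter.atTop (nhds 1) ∧
    ∀ n : ℕ, ∀ x ∈ A, ∀ y ∈ B, ‖T^[n] x - T^[n] y‖ ≤ k n * ‖x - y‖

/-- u_n(x): given the proximal companion x' of x, it is Tⁿ(x') for odd n and Tⁿ(x) for even n. -/
def uSeq {X : Type*} (T : X → X) (x x' : X) (n : ℕ) : X :=
  if Odd n then T^[n] x' else T^[n] x

/-- Weak convergence of a sequence. -/
def WeakConvSeq {X : Type*} [NormedAddCommGroup X] [NormedSpace ℝ X]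
    (u : ℕ → X) (y : X) : Prop :=
  ∀ f : X →L[ℝ] ℝ, Filter.Tendsto (fun n => f (u n)) Filter.atTop (nhds (f y))

/-- ω_w(u): weak subsequential limit points of the sequence u. -/
def omegaW {X : Type*} [NormedAddCommGroup X] [NormedSpace ℝ X] (u : ℕ → X) : Set X :=
  {y | ∃ φ : ℕ → ℕ, StrictMono φ ∧ WeakConvSeq (fun i => u (φ i)) y}

/-- ω(u): norm subsequential limit points of the sequence u. -/
def omegaS {X : Type*} [NormedAddCommGroup X] (u : ℕ → X) : Set X :=
  {y | ∃ φ : ℕ → ℕ, StrictMono φ ∧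
    Filter.Tendsto (fun i => u (φ i)) Filter.atTop (nhds y)}

/-- Every subsequence of u admits a norm-convergent subsequence. -/
def NormSubseqCompact {X : Type*} [NormedAddCommGroup X] (u : ℕ → X) : Prop :=
  ∀ φ : ℕ → ℕ, StrictMono φ → ∃ ψ : ℕ → ℕ, StrictMono ψ ∧ ∃ y : X,
    Filter.Tendsto (fun i => u (φ (ψ i))) Filter.atTop (nhds y)

/-- X has uniformly Kadec-Klee (UKK) norm. -/
def UKKNorm (X : Type*) [NormedAddCommGroup X] [NormedSpace ℝ X] : Prop :=
  ∀ ε : ℝ, 0 < ε → ∃ δ : ℝ, 0 < δ ∧ ∀ (u : ℕ → X) (y : X),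
    (∀ n, ‖u n‖ ≤ 1) → WeakConvSeq u y →
    ε < sInf {d : ℝ | ∃ n m : ℕ, n ≠ m ∧ d = ‖u n - u m‖} → ‖y‖ ≤ 1 - δ

/-- X is nearly uniformly convex: reflexive (the canonical embedding into the
double dual is surjective) with UKK norm. -/
def NearlyUniformlyConvex (X : Type*) [NormedAddCommGroup X] [NormedSpace ℝ X] : Prop :=
  Function.Surjective (NormedSpace.inclusionInDoubleDual ℝ X) ∧ UKKNorm X
set_option maxHeartbeats 1600000 in
/-- Corollary (Goebel–Kirk): an asymptotically nonexpansive self-map of a nonempty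
bounded closed convex subset of a uniformly convex Banach space has a fixed point. -/
theorem fixed_point_asymptotically_nonexpansive_uniformly_convex
    {X : Type*} [NormedAddCommGroup X] [NormedSpace ℝ X] [CompleteSpace X]
    [UniformConvexSpace X]
    (A : Set X) (hAne : A.Nonempty) (hAbd : Bornology.IsBounded A)
    (hAcl : IsClosed A) (hAcv : Convex ℝ A)
    (T : X → X) (hTA : Set.MapsTo T A A)
    (hT : ∃ k : ℕ → ℝ, AsympRelNonexpansive A A T k) :
    ∃ x ∈ A, T x = x := by

  classical
  obtain ⟨k, hk1, hklim, hlip⟩ := hT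
  obtain ⟨x0, hx0⟩ := hAne
  set x : ℕ → X := fun n => T^[n] x0 with hxdef
  have hxA : ∀ n, x n ∈ A := fun n => Set.MapsTo.iterate hTA n hx0
  obtain ⟨C, hC⟩ := hAbd.exists_norm_le
  set r : X → ℝ := fun z => Filter.limsup (fun n => ‖x n - z‖) Filter.atTop with hrdef
  have hbdd : ∀ z : X, Filter.IsBoundedUnder (· ≤ ·) Filter.atTop (fun n => ‖x n - z‖) := by
    intro z
    refine Filter.isBoundedUnder_of ⟨C + ‖z‖, fun n => ?_⟩
    calc ‖x n - z‖ ≤ ‖x n‖ + ‖z‖ := norm_sub_le _ _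
      _ ≤ C + ‖z‖ := by have := hC _ (hxA n); linarith
  have hcob : ∀ z : X, Filter.IsCoboundedUnder (· ≤ ·) Filter.atTop (fun n => ‖x n - z‖) :=
    fun z => Filter.IsBoundedUnder.isCoboundedUnder_le
      (Filter.isBoundedUnder_of ⟨0, fun n => norm_nonneg _⟩)
  have hrle : ∀ z t, (∀ᶠ n in Filter.atTop, ‖x n - z‖ ≤ t) → r z ≤ t :=
    fun z t h => Filter.limsup_le_of_le (hcob z) h
  have hrev : ∀ z : X, ∀ η : ℝ, 0 < η → ∀ᶠ n in Filter.atTop, ‖x n - z‖ < r z + η := by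
    intro z η hη
    exact Filter.eventually_lt_of_limsup_lt (lt_add_of_pos_right _ hη) (hbdd z)
  have hr0 : ∀ z, 0 ≤ r z := fun z =>
    Filter.le_limsup_of_frequently_le (Filter.Frequently.of_forall fun n => norm_nonneg _)
      (hbdd z)
  set R : ℝ := sInf (r '' A) with hRdef
  have hRlb : ∀ t ∈ r '' A, (0:ℝ) ≤ t := by rintro t ⟨z, -, rfl⟩; exact hr0 z
  have hRle : ∀ z ∈ A, R ≤ r z := fun z hz => csInf_le ⟨0, hRlb⟩ ⟨z, hz, rfl⟩
  have hR0 : 0 ≤ R := le_csInf ⟨r x0, ⟨x0, hx0, rfl⟩⟩ hRlb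
  -- key uniform-convexity claim
  have key : ∀ ε : ℝ, 0 < ε → ∃ η : ℝ, 0 < η ∧
      ∀ z ∈ A, ∀ w ∈ A, r z ≤ R + η → r w ≤ R + η → ‖z - w‖ ≤ ε := by
    intro ε hε
    rcases eq_or_lt_of_le hR0 with hR | hR
    · refine ⟨ε/5, by linarith, fun z hz w hw hrz hrw => ?_⟩
      obtain ⟨n, hn1, hn2⟩ :=
        ((hrev z (ε/5) (by linarith)).and (hrev w (ε/5) (by linarith))).exists
      have h3 : z - w = (x n - w) - (x n - z) := by abel
      calc ‖z - w‖ ≤ ‖x n - w‖ + ‖x n - z‖ := by rw [h3]; exact norm_sub_le _ _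
        _ ≤ ε := by linarith
    · obtain ⟨δ₀, hδ₀, hUC⟩ := exists_forall_closed_ball_dist_add_le_two_sub X
        (div_pos hε (by linarith : (0:ℝ) < R + 1))
      set δ : ℝ := min δ₀ 1 with hδdef
      have hδpos : 0 < δ := lt_min hδ₀ one_pos
      have hδ1 : δ ≤ 1 := min_le_right _ _
      have hδδ₀ : δ ≤ δ₀ := min_le_left _ _
      refine ⟨min (1/4) (δ*R/8), by positivity, fun z hz w hw hrz hrw => ?_⟩
      set η : ℝ := min (1/4) (δ*R/8) with hηdef
      have hηpos : 0 < η := by positivity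
      have hη4 : η ≤ 1/4 := min_le_left _ _
      have hη8 : η ≤ δ*R/8 := min_le_right _ _
      by_contra hzw
      push_neg at hzw
      have hεzw : ε ≤ ‖z - w‖ := hzw.le
      set m : X := (2:ℝ)⁻¹ • z + (2:ℝ)⁻¹ • w with hmdef
      have hmA : m ∈ A :=
        hAcv hz hw (by norm_num : (0:ℝ) ≤ 2⁻¹) (by norm_num : (0:ℝ) ≤ 2⁻¹) (by norm_num)
      set s : ℝ := R + 2*η with hs
      have hspos : 0 < s := by simp only [hs]; linarith
      have hs1 : s ≤ R + 1 := by simp only [hs]; linarith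
      have hbound : ∀ᶠ n in Filter.atTop, ‖x n - m‖ ≤ (1 - δ/2) * s := by
        filter_upwards [hrev z η hηpos, hrev w η hηpos] with n h1 h2
        have hu : ‖x n - z‖ ≤ s := by simp only [hs]; linarith
        have hv : ‖x n - w‖ ≤ s := by simp only [hs]; linarith
        have hsu : ‖s⁻¹ • (x n - z)‖ ≤ 1 := by
          rw [norm_smul, Real.norm_eq_abs, abs_inv, abs_of_pos hspos,
            inv_mul_le_iff₀ hspos]
          simpa using hu
        have hsv : ‖s⁻¹ • (x n - w)‖ ≤ 1 := by
          rw [norm_smul, Real.norm_eq_abs, abs_inv, abs_of_pos hspos,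
            inv_mul_le_iff₀ hspos]
          simpa using hv
        have hdiff : ε/(R+1) ≤ ‖s⁻¹ • (x n - z) - s⁻¹ • (x n - w)‖ := by
          rw [← smul_sub, norm_smul, Real.norm_eq_abs, abs_inv, abs_of_pos hspos]
          have h4 : (x n - z) - (x n - w) = w - z := by abel
          rw [h4, norm_sub_rev]
          calc ε/(R+1) ≤ ε/s := by
                apply div_le_div_of_nonneg_left hε.le hspos hs1
            _ ≤ s⁻¹ * ‖z - w‖ := by
                rw [div_eq_inv_mul]
                exact mul_le_mul_of_nonneg_left hεzw (inv_nonneg.2 hspos.le)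
        have hUC' := hUC hsu hsv hdiff
        have hsum : s⁻¹ • (x n - z) + s⁻¹ • (x n - w) = (s⁻¹ * 2) • (x n - m) := by
          rw [← smul_add]
          have : (x n - z) + (x n - w) = (2:ℝ) • (x n - m) := by
            simp only [hmdef]
            module
          rw [this, smul_smul]
        rw [hsum, norm_smul, Real.norm_eq_abs, abs_of_pos (by positivity)] at hUC'
        have h5 : s * (s⁻¹ * 2 * ‖x n - m‖) = 2 * ‖x n - m‖ := by
          field_simp
        have h6 := mul_le_mul_of_nonneg_left hUC' hspos.le
        rw [h5] at h6
        nlinarith [hspos, hδδ₀, norm_nonneg (x n - m)]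
      have hmle : r m ≤ (1 - δ/2) * s := hrle m _ hbound
      have hlt : (1 - δ/2) * s < R := by
        have hexp : (1 - δ/2) * s = R + 2*η - δ*R/2 - δ*η := by simp only [hs]; ring
        nlinarith
      exact absurd (hRle m hmA) (by linarith)
  -- minimizing sequence and its limit
  have hminseq : ∀ j : ℕ, ∃ z ∈ A, r z < R + 1/(j+1) := by
    intro j
    by_contra h
    push_neg at h
    have : R + 1/((j:ℝ)+1) ≤ R := le_csInf ⟨r x0, ⟨x0, hx0, rfl⟩⟩
      (by rintro t ⟨z, hz, rfl⟩; exact h z hz)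
    have : (0:ℝ) < 1/((j:ℝ)+1) := by positivity
    linarith
  choose z hzA hzr using hminseq
  have hzcauchy : CauchySeq z := by
    rw [Metric.cauchySeq_iff]
    intro ε hε
    obtain ⟨η, hη, hkey⟩ := key (ε/2) (by linarith)
    obtain ⟨N, hN⟩ := exists_nat_one_div_lt hη
    refine ⟨N, fun a ha b hb => ?_⟩
    have hra : ∀ j, N ≤ j → r (z j) ≤ R + η := by
      intro j hj
      have h2 : 1/((j:ℝ)+1) ≤ 1/((N:ℝ)+1) := by
        apply div_le_div_of_nonneg_left one_pos.le (by positivity)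
        exact_mod_cast Nat.succ_le_succ hj
      have := hzr j
      linarith [hN]
    rw [dist_eq_norm]
    calc ‖z a - z b‖ ≤ ε/2 := hkey _ (hzA a) _ (hzA b) (hra a ha) (hra b hb)
      _ < ε := by linarith
  obtain ⟨c, hc⟩ := cauchySeq_tendsto_of_complete hzcauchy
  have hcA : c ∈ A := hAcl.mem_of_tendsto hc (Filter.Eventually.of_forall hzA)
  have hrc_le : ∀ j, r c ≤ r (z j) + ‖z j - c‖ := by
    intro j
    refine le_of_forall_pos_le_add ?_
    intro η hη
    refine hrle c _ ?_
    filter_upwards [hrev (z j) η hη] with n hn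
    have h3 : x n - c = (x n - z j) + (z j - c) := by abel
    calc ‖x n - c‖ ≤ ‖x n - z j‖ + ‖z j - c‖ := by rw [h3]; exact norm_add_le _ _
      _ ≤ r (z j) + ‖z j - c‖ + η := by linarith
  have hrcR : r c = R := by
    refine le_antisymm ?_ (hRle c hcA)
    refine le_of_forall_pos_le_add ?_
    intro ε hε
    have h1 : Filter.Tendsto (fun j => ‖z j - c‖) Filter.atTop (nhds 0) :=
      tendsto_iff_norm_sub_tendsto_zero.mp hc
    have h2 : Filter.Tendsto (fun j : ℕ => 1/((j:ℝ)+1)) Filter.atTop (nhds 0) :=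
      tendsto_one_div_add_atTop_nhds_zero_nat
    obtain ⟨j, hj1, hj2⟩ := ((h1.eventually (gt_mem_nhds (half_pos hε))).and
      (h2.eventually (gt_mem_nhds (half_pos hε)))).exists
    have := hrc_le j
    have := hzr j
    linarith
  -- r (T^[m] c) ≤ k m * R
  have hiter : ∀ m, r (T^[m] c) ≤ k m * R := by
    intro m
    refine le_of_forall_pos_le_add ?_
    intro ε hε
    have hkm : 0 < k m := lt_of_lt_of_le one_pos (hk1 m)
    have hev := hrev c (ε / k m) (div_pos hε hkm)
    rw [Filter.eventually_atTop] at hev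
    obtain ⟨N, hN⟩ := hev
    refine hrle _ _ ?_
    rw [Filter.eventually_atTop]
    refine ⟨N + m, fun n hn => ?_⟩
    have h1 : x n = T^[m] (x (n - m)) := by
      show T^[n] x0 = T^[m] (T^[n-m] x0)
      rw [← Function.iterate_add_apply]
      congr 1
      omega
    rw [h1]
    calc ‖T^[m] (x (n-m)) - T^[m] c‖ ≤ k m * ‖x (n-m) - c‖ := hlip m _ (hxA _) _ hcA
      _ ≤ k m * (r c + ε / k m) := by
          apply mul_le_mul_of_nonneg_left _ hkm.le
          exact (hN (n-m) (by omega)).le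
      _ = k m * R + ε := by
          have hne : k m ≠ 0 := hkm.ne'
          rw [hrcR, mul_add, mul_div_cancel₀ _ hne]
  -- the orbit of c converges to c
  have hconv : Filter.Tendsto (fun m => T^[m] c) Filter.atTop (nhds c) := by
    rw [Metric.tendsto_atTop]
    intro ε hε
    obtain ⟨η, hη, hkey⟩ := key (ε/2) (by linarith)
    have h1 : Filter.Tendsto (fun m => k m * R) Filter.atTop (nhds R) := by
      have := hklim.mul_const R
      rwa [one_mul] at this
    have h2 : ∀ᶠ m in Filter.atTop, k m * R < R + η :=
      h1.eventually (gt_mem_nhds (by linarith))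
    rw [Filter.eventually_atTop] at h2
    obtain ⟨N, hN⟩ := h2
    refine ⟨N, fun m hm => ?_⟩
    have hTmA : T^[m] c ∈ A := Set.MapsTo.iterate hTA m hcA
    have := hkey _ hTmA _ hcA ((hiter m).trans (hN m hm).le) (by rw [hrcR]; linarith)
    rw [dist_eq_norm]
    linarith
  refine ⟨c, hcA, ?_⟩
  have h1 : Filter.Tendsto (fun m => T^[m+1] c) Filter.atTop (nhds c) :=
    hconv.comp (Filter.tendsto_add_atTop_nat 1)
  have h2 : Filter.Tendsto (fun m => T^[m+1] c) Filter.atTop (nhds (T c)) := by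
    rw [tendsto_iff_norm_sub_tendsto_zero]
    have hb : ∀ m, ‖T^[m+1] c - T c‖ ≤ k 1 * ‖T^[m] c - c‖ := by
      intro m
      have := hlip 1 (T^[m] c) (Set.MapsTo.iterate hTA m hcA) c hcA
      simpa [Function.iterate_succ_apply'] using this
    have h0 : Filter.Tendsto (fun m => k 1 * ‖T^[m] c - c‖) Filter.atTop (nhds 0) := by
      have := (tendsto_iff_norm_sub_tendsto_zero.mp hconv).const_mul (k 1)
      simpa using this
    exact squeeze_zero (fun m => norm_nonneg _) hb h0
  exact tendsto_nhds_unique h2 h1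
end

section
/- A Banach space X is strictly convex if and only if every nonempty bounded closed convex proximal pair (A, B) in X admits a unique h ∈ X such that B = A + h. -/
open Filter Topology

lemma setDist_le' {X : Type*} [NormedAddCommGroup X] {A B : Set X} {a b : X}
    (ha : a ∈ A) (hb : b ∈ B) : setDist A B ≤ ‖a - b‖ := by
  apply csInf_le
  · exact ⟨0, fun d ⟨a', _, b', _, hd⟩ => hd ▸ norm_nonneg _⟩
  · exact ⟨a, ha, b, hb, rfl⟩

lemma setDist_nonneg' {X : Type*} [NormedAddCommGroup X] (A B : Set X) :
    0 ≤ setDist A B :=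
  Real.sInf_nonneg (fun d ⟨a', _, b', _, hd⟩ => hd ▸ norm_nonneg _)

/-- Key lemma: in a strictly convex space, any two minimal-distance pairs give the
same difference vector. -/
lemma key_diff' {X : Type*} [NormedAddCommGroup X] [NormedSpace ℝ X]
    (hsc : ∀ x y : X, x ≠ y → ‖x‖ = 1 → ‖y‖ = 1 → ‖(2 : ℝ)⁻¹ • (x + y)‖ < 1)
    {A B : Set X} (hA : Convex ℝ A) (hB : Convex ℝ B)
    {x1 x2 y1 y2 : X} (hx1 : x1 ∈ A) (hx2 : x2 ∈ A) (hy1 : y1 ∈ B) (hy2 : y2 ∈ B)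
    (h1 : ‖x1 - y1‖ = setDist A B) (h2 : ‖x2 - y2‖ = setDist A B) :
    x1 - y1 = x2 - y2 := by
  rcases eq_or_lt_of_le (setDist_nonneg' A B) with hd0 | hd0
  · have e1 : x1 = y1 := by
      have : ‖x1 - y1‖ = 0 := by rw [h1, ← hd0]
      rwa [norm_eq_zero, sub_eq_zero] at this
    have e2 : x2 = y2 := by
      have : ‖x2 - y2‖ = 0 := by rw [h2, ← hd0]
      rwa [norm_eq_zero, sub_eq_zero] at this
    rw [e1, e2, sub_self, sub_self]
  · have hmxA : (2:ℝ)⁻¹ • x1 + (2:ℝ)⁻¹ • x2 ∈ A := by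
      have := hA hx1 hx2 (by norm_num : (0:ℝ) ≤ 2⁻¹) (by norm_num : (0:ℝ) ≤ 2⁻¹) (by norm_num)
      simpa using this
    have hmyB : (2:ℝ)⁻¹ • y1 + (2:ℝ)⁻¹ • y2 ∈ B := by
      have := hB hy1 hy2 (by norm_num : (0:ℝ) ≤ 2⁻¹) (by norm_num : (0:ℝ) ≤ 2⁻¹) (by norm_num)
      simpa using this
    have hmid : ‖((2:ℝ)⁻¹ • x1 + (2:ℝ)⁻¹ • x2) - ((2:ℝ)⁻¹ • y1 + (2:ℝ)⁻¹ • y2)‖ = setDist A B := by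
      apply le_antisymm
      · have : ((2:ℝ)⁻¹ • x1 + (2:ℝ)⁻¹ • x2) - ((2:ℝ)⁻¹ • y1 + (2:ℝ)⁻¹ • y2)
            = (2:ℝ)⁻¹ • (x1 - y1) + (2:ℝ)⁻¹ • (x2 - y2) := by
          module
        rw [this]
        calc ‖(2:ℝ)⁻¹ • (x1 - y1) + (2:ℝ)⁻¹ • (x2 - y2)‖
            ≤ ‖(2:ℝ)⁻¹ • (x1 - y1)‖ + ‖(2:ℝ)⁻¹ • (x2 - y2)‖ := norm_add_le _ _
          _ = 2⁻¹ * ‖x1 - y1‖ + 2⁻¹ * ‖x2 - y2‖ := by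
              rw [norm_smul, norm_smul]; norm_num
          _ = setDist A B := by rw [h1, h2]; ring
      · exact setDist_le' hmxA hmyB
    by_contra hne
    have hu : (setDist A B)⁻¹ • (x1 - y1) ≠ (setDist A B)⁻¹ • (x2 - y2) := by
      intro h
      apply hne
      have := congrArg (fun v => (setDist A B) • v) h
      simpa [smul_smul, mul_inv_cancel₀ (ne_of_gt hd0)] using this
    have hn1 : ‖(setDist A B)⁻¹ • (x1 - y1)‖ = 1 := by
      rw [norm_smul, Real.norm_eq_abs, abs_of_pos (inv_pos.mpr hd0), h1,
        inv_mul_cancel₀ (ne_of_gt hd0)]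
    have hn2 : ‖(setDist A B)⁻¹ • (x2 - y2)‖ = 1 := by
      rw [norm_smul, Real.norm_eq_abs, abs_of_pos (inv_pos.mpr hd0), h2,
        inv_mul_cancel₀ (ne_of_gt hd0)]
    have := hsc _ _ hu hn1 hn2
    have heq : (2:ℝ)⁻¹ • ((setDist A B)⁻¹ • (x1 - y1) + (setDist A B)⁻¹ • (x2 - y2))
        = (setDist A B)⁻¹ • (((2:ℝ)⁻¹ • x1 + (2:ℝ)⁻¹ • x2) - ((2:ℝ)⁻¹ • y1 + (2:ℝ)⁻¹ • y2)) := by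
      module
    rw [heq, norm_smul, Real.norm_eq_abs, abs_of_pos (inv_pos.mpr hd0), hmid,
      inv_mul_cancel₀ (ne_of_gt hd0)] at this
    exact lt_irrefl 1 this

/-- Norm-one on a segment when midpoint has norm one. Case `1/2 ≤ a`. -/
lemma seg_norm_one_half' {X : Type*} [NormedAddCommGroup X] [NormedSpace ℝ X]
    {x y : X} (hx : ‖x‖ = 1) (hy : ‖y‖ = 1) (hm : ‖(2 : ℝ)⁻¹ • (x + y)‖ = 1)
    {a b : ℝ} (ha : 0 ≤ a) (hb : 0 ≤ b) (hab : a + b = 1) (hha : 2⁻¹ ≤ a) :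
    ‖a • x + b • y‖ = 1 := by
  have ha0 : 0 < a := lt_of_lt_of_le (by norm_num) hha
  set s : ℝ := (2 * a)⁻¹ with hs
  have hs0 : 0 < s := by positivity
  have hs1 : s ≤ 1 := by
    rw [hs, inv_le_one_iff₀]
    right; linarith
  have hrep : (2 : ℝ)⁻¹ • (x + y) = s • (a • x + b • y) + (1 - s) • y := by
    rw [hs]
    have hb' : b = 1 - a := by linarith
    rw [hb']
    match_scalars <;> (field_simp; try ring)
  have hle : ‖a • x + b • y‖ ≤ 1 := by
    calc ‖a • x + b • y‖ ≤ ‖a • x‖ + ‖b • y‖ := norm_add_le _ _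
      _ = a * 1 + b * 1 := by
          rw [norm_smul, norm_smul, hx, hy, Real.norm_eq_abs, Real.norm_eq_abs,
            abs_of_nonneg ha, abs_of_nonneg hb]
      _ = 1 := by linarith
  have hge : 1 ≤ ‖a • x + b • y‖ := by
    have h1 : (1:ℝ) = ‖s • (a • x + b • y) + (1 - s) • y‖ := by rw [← hrep, hm]
    have h2 : ‖s • (a • x + b • y) + (1 - s) • y‖ ≤ s * ‖a • x + b • y‖ + (1 - s) := by
      calc ‖s • (a • x + b • y) + (1 - s) • y‖
          ≤ ‖s • (a • x + b • y)‖ + ‖(1 - s) • y‖ := norm_add_le _ _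
        _ = s * ‖a • x + b • y‖ + (1 - s) := by
            rw [norm_smul, norm_smul, hy, Real.norm_eq_abs, Real.norm_eq_abs,
              abs_of_pos hs0, abs_of_nonneg (by linarith : (0:ℝ) ≤ 1 - s)]
            ring
    nlinarith [h1, h2]
  linarith

lemma seg_norm_one' {X : Type*} [NormedAddCommGroup X] [NormedSpace ℝ X]
    {x y : X} (hx : ‖x‖ = 1) (hy : ‖y‖ = 1) (hm : ‖(2 : ℝ)⁻¹ • (x + y)‖ = 1)
    {z : X} (hz : z ∈ segment ℝ x y) : ‖z‖ = 1 := by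
  obtain ⟨a, b, ha, hb, hab, rfl⟩ := hz
  rcases le_total (2:ℝ)⁻¹ a with h | h
  · exact seg_norm_one_half' hx hy hm ha hb hab h
  · have hb' : (2:ℝ)⁻¹ ≤ b := by linarith
    have hm' : ‖(2 : ℝ)⁻¹ • (y + x)‖ = 1 := by rwa [add_comm]
    have := seg_norm_one_half' hy hx hm' hb ha (by linarith) hb'
    rwa [add_comm] at this

/-- Remark 2.1: a Banach space X is strictly convex iff every nonempty bounded closed
convex proximal pair (A,B) in X admits a unique h with B = A + h. -/
theorem strictly_convex_iff_proximal_pairs_parallel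
    {X : Type*} [NormedAddCommGroup X] [NormedSpace ℝ X] [CompleteSpace X] :
    (∀ x y : X, x ≠ y → ‖x‖ = 1 → ‖y‖ = 1 → ‖(2 : ℝ)⁻¹ • (x + y)‖ < 1) ↔
      (∀ A B : Set X, A.Nonempty → B.Nonempty →
        Bornology.IsBounded A → Bornology.IsBounded B →
        IsClosed A → IsClosed B → Convex ℝ A → Convex ℝ B →
        IsProximalPair A B → ∃! h : X, B = (fun a => a + h) '' A) := by
  constructor
  · intro hsc A B hAne hBne hAb _hBb _hAcl _hBcl hAconv hBconv hprox
    obtain ⟨a₀, ha₀⟩ := hAne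
    obtain ⟨b₀, hb₀⟩ := hBne
    obtain ⟨x₁, hx₁, y₁, hy₁, h1, h2⟩ := hprox a₀ ha₀ b₀ hb₀
    have hB1 : B = (fun a => a + (y₁ - a₀)) '' A := by
      ext b
      constructor
      · intro hb
        obtain ⟨x₂, hx₂, y₂, hy₂, _h3, h4⟩ := hprox a₀ ha₀ b hb
        have h4' : ‖x₂ - b‖ = setDist A B := by rwa [norm_sub_rev] at h4
        have keyd := key_diff' hsc hAconv hBconv hx₂ ha₀ hb hy₁ h4' h1
        refine ⟨x₂, hx₂, ?_⟩
        have h5 : x₂ + y₁ = a₀ + b := sub_eq_sub_iff_add_eq_add.mp keyd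
        show x₂ + (y₁ - a₀) = b
        calc x₂ + (y₁ - a₀) = x₂ + y₁ - a₀ := by abel
          _ = a₀ + b - a₀ := by rw [h5]
          _ = b := by abel
      · rintro ⟨a, ha, rfl⟩
        obtain ⟨_, _, y₂, hy₂, h3, _⟩ := hprox a ha b₀ hb₀
        have keyd := key_diff' hsc hAconv hBconv ha ha₀ hy₂ hy₁ h3 h1
        have h5 : a + y₁ = a₀ + y₂ := sub_eq_sub_iff_add_eq_add.mp keyd
        have he : a + (y₁ - a₀) = y₂ := by
          calc a + (y₁ - a₀) = a + y₁ - a₀ := by abel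
            _ = a₀ + y₂ - a₀ := by rw [h5]
            _ = y₂ := by abel
        show a + (y₁ - a₀) ∈ B
        rw [he]; exact hy₂
    refine ⟨y₁ - a₀, hB1, ?_⟩
    intro h' hh'
    set h : X := y₁ - a₀ with hhdef
    by_contra hne
    have hk : h' - h ≠ 0 := sub_ne_zero.mpr hne
    have step : ∀ a ∈ A, a + (h' - h) ∈ A := by
      intro a ha
      have hb : a + h' ∈ B := hh' ▸ ⟨a, ha, rfl⟩
      rw [hB1] at hb
      obtain ⟨a', ha', heq⟩ := hb
      have hkey : a' = a + (h' - h) := by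
        have he2 : a' + h = a + h' := heq
        calc a' = a' + h - h := by abel
          _ = a + h' - h := by rw [he2]
          _ = a + (h' - h) := by abel
      rwa [← hkey]
    have iter : ∀ n : ℕ, a₀ + (n : ℝ) • (h' - h) ∈ A := by
      intro n
      induction n with
      | zero => simpa using ha₀
      | succ m ih =>
        have := step _ ih
        have e : a₀ + (m : ℝ) • (h' - h) + (h' - h) = a₀ + ((m + 1 : ℕ) : ℝ) • (h' - h) := by
          push_cast
          module
        rwa [e] at this
    obtain ⟨C, hC⟩ := isBounded_iff_forall_norm_le.mp hAb
    have hb' : ∀ n : ℕ, (n : ℝ) * ‖h' - h‖ ≤ C + ‖a₀‖ := by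
      intro n
      have h6 := hC _ (iter n)
      have h7 : ‖(n : ℝ) • (h' - h)‖ ≤ ‖a₀ + (n : ℝ) • (h' - h)‖ + ‖a₀‖ := by
        have := norm_sub_le (a₀ + (n : ℝ) • (h' - h)) a₀
        simpa using this
      rw [norm_smul, Real.norm_eq_abs, abs_of_nonneg (Nat.cast_nonneg n)] at h7
      linarith
    have hkpos : 0 < ‖h' - h‖ := norm_pos_iff.mpr hk
    obtain ⟨n, hn⟩ := exists_nat_gt ((C + ‖a₀‖) / ‖h' - h‖)
    have := hb' n
    rw [div_lt_iff₀ hkpos] at hn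
    linarith
  · intro H x y hxy hx hy
    by_contra hlt
    push_neg at hlt
    have hle : ‖(2 : ℝ)⁻¹ • (x + y)‖ ≤ 1 := by
      calc ‖(2 : ℝ)⁻¹ • (x + y)‖ = 2⁻¹ * ‖x + y‖ := by
            rw [norm_smul]; norm_num
        _ ≤ 2⁻¹ * (‖x‖ + ‖y‖) := by
            have := norm_add_le x y
            linarith
        _ = 1 := by rw [hx, hy]; norm_num
    have hm : ‖(2 : ℝ)⁻¹ • (x + y)‖ = 1 := le_antisymm hle hlt
    set B : Set X := segment ℝ x y with hBdef
    have hBcomp : IsCompact B := by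
      rw [hBdef, segment_eq_image]
      exact isCompact_Icc.image (by fun_prop)
    have hnormone : ∀ z ∈ B, ‖z‖ = 1 := fun z hz => seg_norm_one' hx hy hm hz
    have hdist : setDist {(0 : X)} B = 1 := by
      have hset : {d : ℝ | ∃ a ∈ ({(0 : X)} : Set X), ∃ b ∈ B, d = ‖a - b‖} = {1} := by
        ext d
        constructor
        · rintro ⟨a, ha, b, hb, rfl⟩
          rw [Set.mem_singleton_iff.mp ha]
          simp [hnormone b hb]
        · rintro rfl
          exact ⟨0, rfl, x, left_mem_segment ℝ x y, by simp [hx]⟩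
      rw [setDist, hset, csInf_singleton]
    have hprox : IsProximalPair {(0 : X)} B := by
      intro p hp q hq
      rw [Set.mem_singleton_iff] at hp
      refine ⟨0, rfl, q, hq, ?_, ?_⟩
      · rw [hp, hdist]; simp [hnormone q hq]
      · rw [hdist]; simp [hnormone q hq]
    obtain ⟨h, hh, _⟩ := H {(0 : X)} B (Set.singleton_nonempty 0)
      ⟨x, left_mem_segment ℝ x y⟩ (Bornology.isBounded_singleton) hBcomp.isBounded
      isClosed_singleton hBcomp.isClosed (convex_singleton 0) (convex_segment x y)
      hprox
    rw [Set.image_singleton, zero_add] at hh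
    apply hxy
    have hx' : x = h := Set.mem_singleton_iff.mp (hh ▸ left_mem_segment ℝ x y)
    have hy' : y = h := Set.mem_singleton_iff.mp (hh ▸ right_mem_segment ℝ x y)
    rw [hx', hy']
end

section
/- Let (A, B) be a nonempty closed convex proximal parallel pair in a real Hilbert space X, with B = A + h. Then (A, B) has the rectangle property; that is, ‖x + h − y‖ = ‖y + h − x‖ for all x, y ∈ A (indeed ‖x + h − y‖² = ‖x − y‖² + ‖h‖²). -/
open Filter Topology

/-!
Minimising pairs of two convex sets in a strictly convex space all have the same difference
vector, so proximality forces `B = A + (y - x)` for any minimising pair `(x, y)`; uniqueness of the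
translation vector then gives `dist(A, B) = ‖h‖`. In a Hilbert space this says that every `x ∈ A`
is the nearest point of `A` to `x - h`, and the variational inequality for projections onto convex
sets yields `⟪y - x, h⟫ = 0` for all `x, y ∈ A`, whence Pythagoras.
-/

open RealInnerProductSpace

section StrictlyConvex

variable {X : Type*} [NormedAddCommGroup X] {A B : Set X}

theorem setDist_le_norm_sub {a b : X} (ha : a ∈ A) (hb : b ∈ B) : setDist A B ≤ ‖a - b‖ :=
  csInf_le ⟨0, by rintro _ ⟨_, _, _, _, rfl⟩; positivity⟩ ⟨a, ha, b, hb, rfl⟩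

variable [NormedSpace ℝ X] [StrictConvexSpace ℝ X]

theorem sub_eq_sub_of_norm_sub_eq_setDist
    (hA : Convex ℝ A) (hB : Convex ℝ B) {x x' y y' : X} (hx : x ∈ A) (hx' : x' ∈ A)
    (hy : y ∈ B) (hy' : y' ∈ B) (h : ‖x - y‖ = setDist A B) (h' : ‖x' - y'‖ = setDist A B) :
    x - y = x' - y' := by
  have hmid : setDist A B ≤ ‖(1 / 2 : ℝ) • ((x - y) + (x' - y'))‖ := by
    have := setDist_le_norm_sub
      (hA hx hx' one_half_pos.le one_half_pos.le (add_halves 1))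
      (hB hy hy' one_half_pos.le one_half_pos.le (add_halves 1))
    convert this using 2
    module
  rw [norm_smul, Real.norm_of_nonneg one_half_pos.le] at hmid
  refine eq_of_norm_eq_of_norm_add_eq (h.trans h'.symm) (le_antisymm (norm_add_le _ _) ?_)
  linarith

theorem IsProximalPair.eq_image_add_sub (hAB : IsProximalPair A B)
    (hA : Convex ℝ A) (hB : Convex ℝ B) {x y : X} (hx : x ∈ A) (hy : y ∈ B)
    (hxy : ‖x - y‖ = setDist A B) : B = (fun a => a + (y - x)) '' A := by
  ext b
  constructor
  · intro hb
    obtain ⟨a, ha, -, -, -, hba⟩ := hAB x hx b hb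
    have hdiff := sub_eq_sub_of_norm_sub_eq_setDist hA hB ha hx hb hy
      ((norm_sub_rev a b).trans hba) hxy
    exact ⟨a, ha, by grind⟩
  · rintro ⟨a, ha, rfl⟩
    obtain ⟨-, -, b, hb, hab, -⟩ := hAB a ha y hy
    have hdiff := sub_eq_sub_of_norm_sub_eq_setDist hA hB ha hx hb hy hab hxy
    convert hb using 1
    grind

theorem IsProximalParallelPair.setDist_eq_norm
    (hAB : IsProximalParallelPair A B) (hA : Convex ℝ A) (hB : Convex ℝ B) {h : X}
    (hBh : B = (fun a => a + h) '' A) (hAne : A.Nonempty) : setDist A B = ‖h‖ := by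
  obtain ⟨x, hx⟩ := hAne
  have hxh : x + h ∈ B := hBh ▸ Set.mem_image_of_mem _ hx
  obtain ⟨-, -, y, hy, hxy, -⟩ := hAB.1.1 x hx _ hxh
  have hv : h = y - x := hAB.2.unique hBh (hAB.1.1.eq_image_add_sub hA hB hx hy hxy)
  rw [← hxy, hv, norm_sub_rev]

end StrictlyConvex

section Hilbert

variable {X : Type*} [NormedAddCommGroup X] [InnerProductSpace ℝ X] {A : Set X} {h : X}

theorem inner_sub_nonneg_of_setDist_eq_norm (hA : Convex ℝ A)
    (hd : setDist A ((fun a => a + h) '' A) = ‖h‖) {x y : X} (hx : x ∈ A) (hy : y ∈ A) :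
    0 ≤ ⟪y - x, h⟫ := by
  have : Nonempty A := ⟨⟨x, hx⟩⟩
  have hproj : ‖(x - h) - x‖ = ⨅ a : A, ‖(x - h) - a‖ := by
    refine le_antisymm (le_ciInf fun a => ?_) (ciInf_le ⟨0, ?_⟩ (⟨x, hx⟩ : A))
    · calc ‖(x - h) - x‖ = setDist A ((fun a => a + h) '' A) := by rw [hd]; simp
        _ ≤ ‖x - (a + h)‖ := setDist_le_norm_sub hx (Set.mem_image_of_mem _ a.2)
        _ = ‖(x - h) - a‖ := by congr 1; abel
    · rintro _ ⟨a, rfl⟩; positivity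
  have := (norm_eq_iInf_iff_real_inner_le_zero hA hx).mp hproj y hy
  rw [sub_sub_cancel_left, inner_neg_left, real_inner_comm] at this
  linarith

theorem norm_add_sub_sq_of_setDist_eq_norm (hA : Convex ℝ A)
    (hd : setDist A ((fun a => a + h) '' A) = ‖h‖) {x y : X} (hx : x ∈ A) (hy : y ∈ A) :
    ‖x + h - y‖ ^ 2 = ‖x - y‖ ^ 2 + ‖h‖ ^ 2 := by
  have hxy := inner_sub_nonneg_of_setDist_eq_norm hA hd hx hy
  have hyx := inner_sub_nonneg_of_setDist_eq_norm hA hd hy hx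
  rw [← neg_sub, inner_neg_left] at hxy
  rw [add_sub_right_comm, norm_add_sq_real]
  linarith

end Hilbert

theorem proximal_parallel_pair_rectangle_property_hilbert_general
    {X : Type*} [NormedAddCommGroup X] [InnerProductSpace ℝ X]
    (A B : Set X) (h : X)
    (hAcv : Convex ℝ A) (hBcv : Convex ℝ B)
    (hpair : IsProximalParallelPair A B)
    (hBh : B = (fun a => a + h) '' A) :
    ∀ x ∈ A, ∀ y ∈ A, ‖x + h - y‖ = ‖y + h - x‖ ∧
      ‖x + h - y‖ ^ 2 = ‖x - y‖ ^ 2 + ‖h‖ ^ 2 := by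
  intro x hx y hy
  have hd := hpair.setDist_eq_norm hAcv hBcv hBh ⟨x, hx⟩
  rw [hBh] at hd
  have hxy := norm_add_sub_sq_of_setDist_eq_norm hAcv hd hx hy
  have hyx := norm_add_sub_sq_of_setDist_eq_norm hAcv hd hy hx
  refine ⟨?_, hxy⟩
  rw [norm_sub_rev y x] at hyx
  exact (sq_eq_sq₀ (norm_nonneg _) (norm_nonneg _)).mp (hxy.trans hyx.symm)

/-- Example 2.1: any (closed convex) proximal parallel pair in a real Hilbert space
has the rectangle property; indeed ‖x + h − y‖² = ‖x − y‖² + ‖h‖². -/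
theorem proximal_parallel_pair_rectangle_property_hilbert
    {X : Type*} [NormedAddCommGroup X] [InnerProductSpace ℝ X] [CompleteSpace X]
    (A B : Set X) (h : X) (hAne : A.Nonempty) (hBne : B.Nonempty)
    (hAcl : IsClosed A) (hBcl : IsClosed B) (hAcv : Convex ℝ A) (hBcv : Convex ℝ B)
    (hpair : IsProximalParallelPair A B)
    (hBh : B = (fun a => a + h) '' A) :
    ∀ x ∈ A, ∀ y ∈ A, ‖x + h - y‖ = ‖y + h - x‖ ∧
      ‖x + h - y‖ ^ 2 = ‖x - y‖ ^ 2 + ‖h‖ ^ 2 :=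
  proximal_parallel_pair_rectangle_property_hilbert_general A B h hAcv hBcv hpair hBh
end

section
/- Let (A, B) be a nonempty bounded convex proximal parallel pair in a Banach space X, with B = A + h, having the rectangle property and property UC, and let T: A ∪ B → A ∪ B be an asymptotically relatively nonexpansive map with T(A) ⊆ B and T(B) ⊆ A. For x ∈ A define r_x(b) = limsup_n ‖u_n(x) − b‖ for b ∈ B and r_{x+h}(a) = limsup_n ‖u_n(x+h) − a‖ for a ∈ A. Then r_x(a + h) = r_{x+h}(a) for all a ∈ A, and consequently inf_{b ∈ B} r_x(b) = inf_{z ∈ A} r_{x+h}(z). -/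
open Filter Topology

lemma limsup_le_of_tendsto_sub' (u v : ℕ → ℝ) (hu0 : ∀ n, 0 ≤ u n)
    (C : ℝ) (hvC : ∀ n, v n ≤ C)
    (hd : Tendsto (fun n => |u n - v n|) atTop (nhds 0)) :
    limsup u atTop ≤ limsup v atTop := by
  refine le_of_forall_pos_le_add fun ε hε => ?_
  have hev : ∀ᶠ n in atTop, u n ≤ v n + ε := by
    filter_upwards [Metric.tendsto_nhds.mp hd ε hε] with n hn
    simp only [Real.dist_eq, sub_zero, abs_abs] at hn
    have := (abs_lt.mp hn).2
    linarith [le_abs_self (u n - v n)]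
  have hcu : atTop.IsCoboundedUnder (· ≤ ·) u :=
    isCoboundedUnder_le_of_le atTop (x := 0) hu0
  have hbv : atTop.IsBoundedUnder (· ≤ ·) (fun n => v n + ε) :=
    isBoundedUnder_of ⟨C + ε, fun n => by have := hvC n; linarith⟩
  have hcv : atTop.IsCoboundedUnder (· ≤ ·) v := by
    refine isCoboundedUnder_le_of_eventually_le atTop (x := -1) ?_
    filter_upwards [Metric.tendsto_nhds.mp hd 1 one_pos] with n hn
    simp only [Real.dist_eq, sub_zero, abs_abs] at hn
    have := hu0 n
    linarith [le_abs_self (u n - v n)]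
  calc limsup u atTop ≤ limsup (fun n => v n + ε) atTop := limsup_le_limsup hev hcu hbv
    _ = limsup v atTop + ε :=
      limsup_add_const atTop v ε (isBoundedUnder_of ⟨C, hvC⟩) hcv

lemma limsup_eq_of_tendsto_sub' (u v : ℕ → ℝ) (hu0 : ∀ n, 0 ≤ u n) (hv0 : ∀ n, 0 ≤ v n)
    (Cu Cv : ℝ) (huC : ∀ n, u n ≤ Cu) (hvC : ∀ n, v n ≤ Cv)
    (hd : Tendsto (fun n => |u n - v n|) atTop (nhds 0)) :
    limsup u atTop = limsup v atTop :=
  le_antisymm (limsup_le_of_tendsto_sub' u v hu0 Cv hvC hd)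
    (limsup_le_of_tendsto_sub' v u hv0 Cu huC (by simpa [abs_sub_comm] using hd))

/-- Proposition 3.2(2): r_x(a+h) = r_{x+h}(a) for all a ∈ A, hence
inf_{b ∈ B} r_x(b) = inf_{z ∈ A} r_{x+h}(z). -/
theorem asymptotic_radius_translate_eq
    {X : Type*} [NormedAddCommGroup X] [NormedSpace ℝ X] [CompleteSpace X]
    (A B : Set X) (h : X) (hAne : A.Nonempty) (hBne : B.Nonempty)
    (hAbd : Bornology.IsBounded A) (hBbd : Bornology.IsBounded B)
    (hAcv : Convex ℝ A) (hBcv : Convex ℝ B)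
    (hpair : IsProximalParallelPair A B)
    (hBh : B = (fun a => a + h) '' A)
    (hrect : RectangleProperty A h)
    (hUC : PropertyUC A B)
    (T : X → X) (hTA : Set.MapsTo T A B) (hTB : Set.MapsTo T B A)
    (hT : ∃ k : ℕ → ℝ, AsympRelNonexpansive A B T k) :
    ∀ x ∈ A,
      (∀ a ∈ A,
        Filter.limsup (fun n => ‖uSeq T x (x + h) n - (a + h)‖) Filter.atTop =
          Filter.limsup (fun n => ‖uSeq T (x + h) x n - a‖) Filter.atTop) ∧
      sInf ((fun b => Filter.limsup (fun n => ‖uSeq T x (x + h) n - b‖) Filter.atTop) '' B) =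
        sInf ((fun a => Filter.limsup (fun n => ‖uSeq T (x + h) x n - a‖) Filter.atTop) '' A) := by
  obtain ⟨k, hk1, hk2, hk3⟩ := hT
  -- ‖h‖ is a lower bound for distances between A and B
  have hlow : ∀ a ∈ A, ∀ b ∈ B, ‖h‖ ≤ ‖a - b‖ := by
    intro a ha b hb
    obtain ⟨a', ha', hab⟩ := hBh ▸ hb
    have e1 : ‖a - b‖ = ‖a' + h - a‖ := by
      rw [← hab, show a - (a' + h) = -(a' + h - a) by abel, norm_neg]
    have e2 : ‖a + h - a'‖ = ‖a' + h - a‖ := hrect a ha a' ha'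
    have e3 : ‖h + h‖ ≤ ‖a' + h - a‖ + ‖a + h - a'‖ := by
      calc ‖h + h‖ = ‖(a' + h - a) + (a + h - a')‖ := congrArg norm (by abel)
        _ ≤ _ := norm_add_le _ _
    have e4 : ‖h + h‖ = 2 * ‖h‖ := by
      rw [show h + h = (2 : ℝ) • h by rw [two_smul], norm_smul]; simp
    rw [e1]; linarith
  -- setDist A B = ‖h‖
  have hdist : setDist A B = ‖h‖ := by
    obtain ⟨a0, ha0⟩ := hAne
    have hb0 : a0 + h ∈ B := hBh ▸ ⟨a0, ha0, rfl⟩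
    have hmem : ‖h‖ ∈ {d : ℝ | ∃ a ∈ A, ∃ b ∈ B, d = ‖a - b‖} :=
      ⟨a0, ha0, a0 + h, hb0, by rw [show a0 - (a0 + h) = -h by abel, norm_neg]⟩
    have hlb : ∀ d ∈ {d : ℝ | ∃ a ∈ A, ∃ b ∈ B, d = ‖a - b‖}, ‖h‖ ≤ d := by
      rintro d ⟨a, ha, b, hb, rfl⟩; exact hlow a ha b hb
    exact le_antisymm (csInf_le ⟨‖h‖, hlb⟩ hmem) (le_csInf ⟨_, hmem⟩ hlb)
  intro x hx
  have hx' : x + h ∈ B := hBh ▸ ⟨x, hx, rfl⟩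
  -- parity membership
  have hmem : ∀ n : ℕ, (¬ Odd n → T^[n] x ∈ A ∧ T^[n] (x + h) ∈ B) ∧
      (Odd n → T^[n] x ∈ B ∧ T^[n] (x + h) ∈ A) := by
    intro n
    induction n with
    | zero => exact ⟨fun _ => ⟨hx, hx'⟩, fun hodd => absurd hodd (by decide)⟩
    | succ m ih =>
      constructor
      · intro hne
        have hm : Odd m := by
          rcases Nat.even_or_odd m with he | ho
          · exact absurd (Even.add_one he) hne
          · exact ho
        obtain ⟨h1, h2⟩ := ih.2 hm
        rw [Function.iterate_succ_apply', Function.iterate_succ_apply']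
        exact ⟨hTB h1, hTA h2⟩
      · intro hodd
        have hm : ¬ Odd m := by
          rcases Nat.even_or_odd m with he | ho
          · simpa using he
          · exact absurd (Odd.add_one ho) (by simpa using hodd)
        obtain ⟨h1, h2⟩ := ih.1 hm
        rw [Function.iterate_succ_apply', Function.iterate_succ_apply']
        exact ⟨hTA h1, hTB h2⟩
  set p : ℕ → X := uSeq T x (x + h) with hp
  set q : ℕ → X := uSeq T (x + h) x with hq
  have hpA : ∀ n, p n ∈ A := by
    intro n; rw [hp]; unfold uSeq
    by_cases hn : Odd n
    · simp only [hn, if_true]; exact ((hmem n).2 hn).2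
    · simp only [hn, if_false]; exact ((hmem n).1 hn).1
  have hqB : ∀ n, q n ∈ B := by
    intro n; rw [hq]; unfold uSeq
    by_cases hn : Odd n
    · simp only [hn, if_true]; exact ((hmem n).2 hn).1
    · simp only [hn, if_false]; exact ((hmem n).1 hn).2
  have hxh : ‖x - (x + h)‖ = ‖h‖ := by rw [show x - (x + h) = -h by abel, norm_neg]
  have hpq : ∀ n, ‖p n - q n‖ ≤ k n * ‖h‖ := by
    intro n; rw [hp, hq]; unfold uSeq
    by_cases hn : Odd n
    · simp only [hn, if_true]
      rw [norm_sub_rev, ← hxh]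
      exact hk3 n x hx (x + h) hx'
    · simp only [hn, if_false]
      rw [← hxh]
      exact hk3 n x hx (x + h) hx'
  have hpq_ge : ∀ n, ‖h‖ ≤ ‖p n - q n‖ := fun n => hlow (p n) (hpA n) (q n) (hqB n)
  have htend : Tendsto (fun n => ‖p n - q n‖) atTop (nhds ‖h‖) := by
    have hupper : Tendsto (fun n => k n * ‖h‖) atTop (nhds ‖h‖) := by
      have := hk2.mul_const ‖h‖
      rwa [one_mul] at this
    exact tendsto_of_tendsto_of_tendsto_of_le_of_le tendsto_const_nhds hupper hpq_ge hpq
  have hq'A : ∀ n, q n - h ∈ A := by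
    intro n
    obtain ⟨a, ha, hab⟩ := hBh ▸ hqB n
    rwa [show q n - h = a by rw [← hab]; simp]
  have hzero : Tendsto (fun n => ‖p n - (q n - h)‖) atTop (nhds 0) := by
    apply hUC p (fun n => q n - h) q hpA hq'A hqB
    · rwa [hdist]
    · rw [hdist]
      have : ∀ n, ‖q n - h - q n‖ = ‖h‖ := fun n => by
        rw [show q n - h - q n = -h by abel, norm_neg]
      simp only [this]; exact tendsto_const_nhds
  -- bounds
  obtain ⟨CA, hCA⟩ := hAbd.exists_norm_le
  obtain ⟨CB, hCB⟩ := hBbd.exists_norm_le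
  have main : ∀ a ∈ A,
      limsup (fun n => ‖p n - (a + h)‖) atTop = limsup (fun n => ‖q n - a‖) atTop := by
    intro a ha
    have hrw : ∀ n, ‖p n - (a + h)‖ = ‖p n + h - a‖ := by
      intro n
      rw [show p n - (a + h) = -(a + h - p n) by abel, norm_neg]
      exact hrect a ha (p n) (hpA n)
    have hd : Tendsto (fun n => |‖p n - (a + h)‖ - ‖q n - a‖|) atTop (nhds 0) := by
      have hb : ∀ n, |‖p n - (a + h)‖ - ‖q n - a‖| ≤ ‖p n - (q n - h)‖ := by
        intro n
        rw [hrw n]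
        calc |‖p n + h - a‖ - ‖q n - a‖| ≤ ‖(p n + h - a) - (q n - a)‖ :=
              abs_norm_sub_norm_le _ _
          _ = ‖p n - (q n - h)‖ := congrArg norm (by abel)
      exact tendsto_of_tendsto_of_tendsto_of_le_of_le tendsto_const_nhds hzero
        (fun n => abs_nonneg _) hb
    exact limsup_eq_of_tendsto_sub' _ _ (fun n => norm_nonneg _) (fun n => norm_nonneg _)
      (CA + ‖a + h‖) (CB + ‖a‖)
      (fun n => (norm_sub_le _ _).trans (by linarith [hCA (p n) (hpA n)]))
      (fun n => (norm_sub_le _ _).trans (by linarith [hCB (q n) (hqB n)]))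
      hd
  refine ⟨main, ?_⟩
  congr 1
  rw [hBh, Set.image_image]
  exact Set.image_congr fun a ha => main a ha
end

section
/- Let A be a nonempty closed convex subset and B a nonempty closed subset of a uniformly convex Banach space X. Let {x_n} and {z_n} be sequences in A and {y_n} a sequence in B such that ‖x_n − y_n‖ → dist(A, B) and ‖z_n − y_n‖ → dist(A, B). Then ‖x_n − z_n‖ → 0. In particular, such a pair (A, B) has property UC. -/
open Filter Topology

/-- Lemma 2.1 (Eldred–Veeramani): in a uniformly convex Banach space, with A nonempty
closed convex and B nonempty closed, if ‖x_n − y_n‖ → dist(A,B) and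
‖z_n − y_n‖ → dist(A,B), then ‖x_n − z_n‖ → 0; in particular (A,B) has property UC. -/
theorem uniformly_convex_property_UC
    {X : Type*} [NormedAddCommGroup X] [NormedSpace ℝ X] [CompleteSpace X]
    [UniformConvexSpace X]
    (A B : Set X) (hAne : A.Nonempty) (hBne : B.Nonempty)
    (hAcl : IsClosed A) (hAcv : Convex ℝ A) (hBcl : IsClosed B) :
    (∀ x z y : ℕ → X, (∀ n, x n ∈ A) → (∀ n, z n ∈ A) → (∀ n, y n ∈ B) →
      Filter.Tendsto (fun n => ‖x n - y n‖) Filter.atTop (nhds (setDist A B)) →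
      Filter.Tendsto (fun n => ‖z n - y n‖) Filter.atTop (nhds (setDist A B)) →
      Filter.Tendsto (fun n => ‖x n - z n‖) Filter.atTop (nhds 0)) ∧
    PropertyUC A B := by
  have hd0 : 0 ≤ setDist A B := by
    apply Real.sInf_nonneg
    rintro r ⟨a, -, b, -, rfl⟩
    exact norm_nonneg _
  have hlow : ∀ a ∈ A, ∀ b ∈ B, setDist A B ≤ ‖a - b‖ := by
    intro a ha b hb
    apply csInf_le
    · exact ⟨0, by rintro r ⟨a', -, b', -, rfl⟩; exact norm_nonneg _⟩
    · exact ⟨a, ha, b, hb, rfl⟩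
  set d := setDist A B with hdd
  have main : ∀ x z y : ℕ → X, (∀ n, x n ∈ A) → (∀ n, z n ∈ A) → (∀ n, y n ∈ B) →
      Filter.Tendsto (fun n => ‖x n - y n‖) Filter.atTop (nhds d) →
      Filter.Tendsto (fun n => ‖z n - y n‖) Filter.atTop (nhds d) →
      Filter.Tendsto (fun n => ‖x n - z n‖) Filter.atTop (nhds 0) := by
    intro x z y hx hz hy h1 h2
    rcases hd0.eq_or_lt with hzero | hdpos
    · -- d = 0 : squeeze
      have hb : ∀ n, ‖x n - z n‖ ≤ ‖x n - y n‖ + ‖z n - y n‖ := by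
        intro n
        calc ‖x n - z n‖ = ‖(x n - y n) - (z n - y n)‖ := by congr 1; abel
          _ ≤ ‖x n - y n‖ + ‖z n - y n‖ := norm_sub_le _ _
      have hlim : Filter.Tendsto (fun n => ‖x n - y n‖ + ‖z n - y n‖)
          Filter.atTop (nhds 0) := by
        have := h1.add h2
        rwa [← hzero, add_zero] at this
      exact squeeze_zero (fun n => norm_nonneg _) hb hlim
    · by_contra hcon
      rw [Metric.tendsto_atTop] at hcon
      push_neg at hcon
      obtain ⟨ε, hε, hfreq⟩ := hcon
      have hfreq' : ∀ N, ∃ n ≥ N, ε ≤ ‖x n - z n‖ := by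
        intro N
        obtain ⟨n, hn, hn'⟩ := hfreq N
        refine ⟨n, hn, ?_⟩
        rwa [Real.dist_eq, sub_zero, abs_of_nonneg (norm_nonneg _)] at hn'
      have hε0 : (0:ℝ) < ε / (d + 1) := div_pos hε (by linarith)
      obtain ⟨δ, hδ, hconv⟩ := exists_forall_closed_ball_dist_add_le_two_sub X hε0
      set δ' := min δ 1 with hδ'def
      have hδ'0 : 0 < δ' := lt_min hδ one_pos
      have hδ'1 : δ' ≤ 1 := min_le_right _ _
      set η := min 1 (d * δ' / 4) with hηdef
      have hη0 : 0 < η := lt_min one_pos (by positivity)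
      have hη1 : η ≤ 1 := min_le_left _ _
      have hη2 : η ≤ d * δ' / 4 := min_le_right _ _
      set R := d + η with hRdef
      have hR0 : 0 < R := by linarith
      have ev1 : ∀ᶠ n in Filter.atTop, ‖x n - y n‖ < R :=
        h1.eventually (Filter.Tendsto.eventually_lt_const (by linarith) tendsto_id) |>.mono
          (fun n hn => hn)
      have ev2 : ∀ᶠ n in Filter.atTop, ‖z n - y n‖ < R :=
        h2.eventually (Filter.Tendsto.eventually_lt_const (by linarith) tendsto_id) |>.mono
          (fun n hn => hn)
      obtain ⟨N, hN⟩ := Filter.eventually_atTop.mp (ev1.and ev2)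
      obtain ⟨n, hnN, hnε⟩ := hfreq' N
      obtain ⟨hxb, hzb⟩ := hN n hnN
      set u := x n - y n with hu
      set v := z n - y n with hv
      have hnu : ‖R⁻¹ • u‖ ≤ 1 := by
        rw [norm_smul_of_nonneg (inv_nonneg.2 hR0.le)]
        rw [inv_mul_le_iff₀ hR0, mul_one]
        exact hxb.le
      have hnv : ‖R⁻¹ • v‖ ≤ 1 := by
        rw [norm_smul_of_nonneg (inv_nonneg.2 hR0.le)]
        rw [inv_mul_le_iff₀ hR0, mul_one]
        exact hzb.le
      have hsub : ε / (d + 1) ≤ ‖R⁻¹ • u - R⁻¹ • v‖ := by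
        rw [← smul_sub, norm_smul_of_nonneg (inv_nonneg.2 hR0.le)]
        have huv : u - v = x n - z n := by rw [hu, hv]; abel
        rw [huv]
        rw [div_le_iff₀ (by linarith : (0:ℝ) < d + 1)]
        rw [inv_mul_eq_div, div_mul_eq_mul_div, le_div_iff₀ hR0]
        have h1' : ε * R ≤ ε * (d + 1) := by nlinarith
        nlinarith [hnε, norm_nonneg (x n - z n)]
      have hadd := hconv hnu hnv hsub
      have hadd' : ‖u + v‖ ≤ R * (2 - δ) := by
        have : ‖R⁻¹ • u + R⁻¹ • v‖ = R⁻¹ * ‖u + v‖ := by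
          rw [← smul_add, norm_smul_of_nonneg (inv_nonneg.2 hR0.le)]
        rw [this, inv_mul_le_iff₀ hR0] at hadd
        linarith [hadd]
      have hmidA : (2:ℝ)⁻¹ • x n + (2:ℝ)⁻¹ • z n ∈ A :=
        hAcv (hx n) (hz n) (by norm_num) (by norm_num) (by norm_num)
      have hmid : ‖(2:ℝ)⁻¹ • x n + (2:ℝ)⁻¹ • z n - y n‖ = ‖u + v‖ / 2 := by
        have : (2:ℝ)⁻¹ • x n + (2:ℝ)⁻¹ • z n - y n = (2:ℝ)⁻¹ • (u + v) := by
          rw [hu, hv]; module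
        rw [this, norm_smul_of_nonneg (by norm_num : (0:ℝ) ≤ (2:ℝ)⁻¹)]
        ring
      have hge := hlow _ hmidA _ (hy n)
      rw [hmid] at hge
      have hδδ' : δ' ≤ δ := min_le_left _ _
      -- ‖u+v‖ ≤ R(2-δ) ≤ R(2-δ'), and R(2-δ')/2 < d
      have : R * (2 - δ) ≤ R * (2 - δ') := by nlinarith
      nlinarith [hge, hadd', this, hη2, hdpos, hδ'0]
  exact ⟨main, main⟩
end
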